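/- Let R be a ring and N ≥ 2. An N-complex X of R-modules satisfies H_{(1)}^j(X) = 0 for all j ∈ ℤ if and only if every morphism of N-complexes μ_1^i(R) → X (for every i ∈ ℤ) is nullhomotopic, i.e. Hom_{K_N(Mod_R)}(μ_1^i(R), X) = 0 for all i. -/

import Mathlib

/-!
A morphism `φ : μ_1^i(R) → X` is the same as a cycle `x = φ^i(1) ∈ ker(d : X^i → X^(i+1))`,
and every cycle arises this way. Since `μ_1^i(R)` has zero differential, only the summand
`d^(N-1) ∘ s^i` of a nullhomotopy survives, so `φ` is nullhomotopic exactly when `x` lies in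
the image of `d^(N-1)`, i.e. vanishes in `H_(1)^i(X)`.
-/

universe u v

variable {R : Type u} [Ring R]

/-- Transport of a graded component along an equality of degrees. -/
def lcast {M : ℤ → Type v} [∀ i, AddCommGroup (M i)] [∀ i, Module R (M i)]
    {a b : ℤ} (h : a = b) : M a →ₗ[R] M b := by subst h; exact LinearMap.id

/-- The `k`-fold iterate `d^k : M^i → M^(i+k)` of a degree-one map `d`. -/
def dIter (M : ℤ → Type v) [∀ i, AddCommGroup (M i)] [∀ i, Module R (M i)]
    (d : ∀ i : ℤ, M i →ₗ[R] M (i + 1)) : ∀ (k : ℕ) (i : ℤ), M i →ₗ[R] M (i + k)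
  | 0, i => lcast (by simp)
  | k + 1, i =>
    (lcast (show i + 1 + (k : ℕ) = i + ((k : ℕ) + 1 : ℕ) by push_cast; ring)).comp
      ((dIter M d k (i + 1)).comp (d i))

/-- An `N`-complex of `R`-modules. -/
structure NCx (R : Type u) [Ring R] (N : ℕ) where
  M : ℤ → Type v
  [acg : ∀ i, AddCommGroup (M i)]
  [mod : ∀ i, Module R (M i)]
  d : ∀ i : ℤ, M i →ₗ[R] M (i + 1)
  dN : ∀ i : ℤ, dIter M d N i = 0

attribute [instance] NCx.acg NCx.mod

/-- A morphism of `N`-complexes. -/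
structure NCxHom {N : ℕ} (A B : NCx.{u, v} R N) where
  f : ∀ i : ℤ, A.M i →ₗ[R] B.M i
  comm : ∀ i : ℤ, (B.d i).comp (f i) = (f (i + 1)).comp (A.d i)

/-- A morphism `f` of `N`-complexes is nullhomotopic if there is a family of maps
`s^j : A^j → B^(j-N+1)` with `f^i = ∑_{j=0}^{N-1} d^(N-j-1) ∘ s^(i+j) ∘ d^j`. -/
def Nullhomotopic {N : ℕ} {A B : NCx.{u, v} R N} (φ : NCxHom A B) : Prop :=
  ∃ s : ∀ j : ℤ, A.M j →ₗ[R] B.M (j - N + 1),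
    ∀ (i : ℤ) (x : A.M i),
      φ.f i x = ∑ j : Fin N,
        lcast (R := R) (M := B.M)
          (show i + ((j : ℕ) : ℤ) - (N : ℤ) + 1 + ((N - 1 - (j : ℕ) : ℕ) : ℤ) = i by
            have := j.isLt; omega)
          (dIter B.M B.d (N - 1 - (j : ℕ)) (i + ((j : ℕ) : ℤ) - (N : ℤ) + 1)
            (s (i + ((j : ℕ) : ℤ)) (dIter A.M A.d (j : ℕ) i x)))

/-- The `N`-complex `μ_1^i(R)`: the free module `R` concentrated in degree `i`, with
zero differential.  (In degree `j` it is the module of functions ``PLift (j = i) → R`, which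
is `R` for `j = i` and `0` otherwise.) -/
def mu1 (R : Type u) [Ring R] (N : ℕ) (hN : N ≠ 0) (i : ℤ) : NCx.{u, u} R N where
  M j := PLift (j = i) → R
  acg j := inferInstanceAs (AddCommGroup (PLift (j = i) → R))
  mod j := inferInstanceAs (Module R (PLift (j = i) → R))
  d _ := 0
  dN j := by
    obtain ⟨m, rfl⟩ := Nat.exists_eq_succ_of_ne_zero hN
    simp [dIter]

section

variable {M : ℤ → Type v} [∀ i, AddCommGroup (M i)] [∀ i, Module R (M i)]

lemma lcast_lcast {a b c : ℤ} (h₁ : a = b) (h₂ : b = c) (x : M a) :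
    lcast (R := R) h₂ (lcast (R := R) h₁ x) = lcast (R := R) (h₁.trans h₂) x := by
  subst h₁ h₂; rfl

lemma dIter_lcast (d : ∀ i : ℤ, M i →ₗ[R] M (i + 1)) (k : ℕ) {a b : ℤ} (h : a = b) (y : M a) :
    dIter M d k b (lcast (R := R) h y) =
      lcast (R := R) (by rw [h]) (dIter M d k a y) := by
  subst h; rfl

lemma dIter_eq_zero_of_d_eq_zero {d : ∀ i : ℤ, M i →ₗ[R] M (i + 1)} (hd : ∀ i, d i = 0)
    {k : ℕ} (hk : k ≠ 0) (i : ℤ) : dIter M d k i = 0 := by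
  obtain ⟨k, rfl⟩ := Nat.exists_eq_succ_of_ne_zero hk
  simp [dIter, hd]

end

namespace NCx

variable {N : ℕ}

def IsBoundary (X : NCx.{u, v} R N) {j : ℤ} (x : X.M j) : Prop :=
  ∃ y : X.M (j - ((N - 1 : ℕ) : ℤ)),
    lcast (R := R) (M := X.M) (Int.sub_add_cancel j _)
      (dIter X.M X.d (N - 1) (j - ((N - 1 : ℕ) : ℤ)) y) = x

lemma isBoundary_lcast_dIter (X : NCx.{u, v} R N) {a j : ℤ} (h : a + ((N - 1 : ℕ) : ℤ) = j)
    (y : X.M a) : X.IsBoundary (lcast (R := R) h (dIter X.M X.d (N - 1) a y)) := by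
  subst h
  exact ⟨lcast (R := R) (by omega) y, by rw [dIter_lcast, lcast_lcast]⟩

end NCx

theorem nullhomotopic_iff_of_d_eq_zero {N : ℕ} (hN : N ≠ 0) {A B : NCx.{u, v} R N}
    (hA : ∀ i, A.d i = 0) (φ : NCxHom A B) :
    Nullhomotopic φ ↔ ∃ s : ∀ j : ℤ, A.M j →ₗ[R] B.M (j - N + 1), ∀ (i : ℤ) (x : A.M i),
      φ.f i x =
        lcast (R := R) (M := B.M) (by omega) (dIter B.M B.d (N - 1) (i - N + 1) (s i x)) := by
  refine exists_congr fun s => forall₂_congr fun i x => ?_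
  rw [Finset.sum_eq_single_of_mem ⟨0, Nat.pos_of_ne_zero hN⟩ (Finset.mem_univ _)]
  · -- the surviving summand sits in degree `i + ((0 : ℕ) : ℤ)`, only propositionally `i`
    have hsummand : ∀ (a : ℤ) (ha : i = a) (q : a - N + 1 + ((N - 1 : ℕ) : ℤ) = i),
        lcast (R := R) (M := B.M) q
            (dIter B.M B.d (N - 1) (a - N + 1) (s a (lcast (R := R) ha x))) =
          lcast (R := R) (M := B.M) (by omega) (dIter B.M B.d (N - 1) (i - N + 1) (s i x)) := by
      rintro a rfl q; rfl
    exact iff_of_eq (congrArg (φ.f i x = ·) (hsummand _ _ _))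
  · intro j _ hj
    rw [dIter_eq_zero_of_d_eq_zero hA (fun h => hj (Fin.ext h))]
    simp

namespace mu1

variable {N : ℕ} (hN : N ≠ 0)

def one (i : ℤ) : (mu1 R N hN i).M i := fun _ => 1

lemma d_eq_zero (i j : ℤ) : (mu1 R N hN i).d j = 0 := rfl

lemma eq_smul_one {i : ℤ} (g : (mu1 R N hN i).M i) : g = g ⟨rfl⟩ • one hN i := by
  funext ⟨_⟩
  exact (mul_one _).symm

lemma eq_zero_of_ne {i j : ℤ} (h : j ≠ i) (g : (mu1 R N hN i).M j) : g = 0 :=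
  funext fun u => absurd u.down h

variable {Y : ℤ → Type v} [∀ j, AddCommGroup (Y j)] [∀ j, Module R (Y j)]

def desc (i : ℤ) (y : Y i) (j : ℤ) : (mu1 R N hN i).M j →ₗ[R] Y j where
  toFun g := if h : j = i then g ⟨h⟩ • lcast (R := R) h.symm y else 0
  map_add' g g' := by
    split_ifs
    exacts [add_smul _ _ _, (add_zero 0).symm]
  map_smul' c g := by
    split_ifs
    exacts [mul_smul _ _ _, (smul_zero c).symm]

lemma desc_self_apply {i : ℤ} (y : Y i) (g : (mu1 R N hN i).M i) :
    desc hN i y i g = g ⟨rfl⟩ • y :=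
  dif_pos rfl

lemma desc_of_ne {i j : ℤ} (y : Y i) (h : j ≠ i) : desc (R := R) hN i y j = 0 :=
  LinearMap.ext fun _ => dif_neg h

def homOfCycle (X : NCx.{u, u} R N) {i : ℤ} (x : X.M i) (hx : X.d i x = 0) :
    NCxHom (mu1 R N hN i) X where
  f := desc hN i x
  comm j := LinearMap.ext fun g => by
    change X.d j (desc hN i x j g) = desc hN i x (j + 1) 0
    rw [map_zero]
    by_cases h : j = i
    · subst h
      rw [desc_self_apply, map_smul, hx, smul_zero]
    · rw [desc_of_ne hN x h, LinearMap.zero_apply, map_zero]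

lemma homOfCycle_f_one (X : NCx.{u, u} R N) {i : ℤ} (x : X.M i) (hx : X.d i x = 0) :
    (homOfCycle hN X x hx).f i (one hN i) = x :=
  (desc_self_apply hN x _).trans (one_smul R x)

lemma d_f_one {X : NCx.{u, u} R N} {i : ℤ} (φ : NCxHom (mu1 R N hN i) X) :
    X.d i (φ.f i (one hN i)) = 0 := by
  simpa [d_eq_zero] using LinearMap.congr_fun (φ.comm i) (one hN i)

theorem nullhomotopic_iff_isBoundary {X : NCx.{u, u} R N} {i : ℤ}
    (φ : NCxHom (mu1 R N hN i) X) : Nullhomotopic φ ↔ X.IsBoundary (φ.f i (one hN i)) := by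
  rw [nullhomotopic_iff_of_d_eq_zero hN (d_eq_zero hN i)]
  constructor
  · rintro ⟨s, hs⟩
    rw [hs]
    exact X.isBoundary_lcast_dIter _ _
  · rintro ⟨y, hy⟩
    refine ⟨desc hN (Y := fun j => X.M (j - N + 1)) i (lcast (R := R) (by omega) y),
      fun j g => ?_⟩
    by_cases h : j = i
    · subst h
      calc φ.f j g = g ⟨rfl⟩ • φ.f j (one hN j) := by
            conv_lhs => rw [eq_smul_one hN g]
            exact map_smul _ _ _
        _ = _ := by
            rw [← hy, desc_self_apply, map_smul, map_smul, dIter_lcast, lcast_lcast]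
    · rw [eq_zero_of_ne hN h g, map_zero, map_zero, map_zero, map_zero]

end mu1

/-- Let `R` be a ring and `N ≥ 2`.  An `N`-complex `X` of `R`-modules satisfies
`H_(1)^j(X) = 0` for all `j` (every element of `ker(d : X^j → X^(j+1))` lies in the
image of `d^(N-1)`) if and only if for every `i ∈ ℤ` every morphism of `N`-complexes
`μ_1^i(R) → X` is nullhomotopic, i.e. `Hom_{K_N(Mod_R)}(μ_1^i(R), X) = 0`. -/
theorem firstCohomology_vanishes_iff_hom_from_mu1_nullhomotopic
    (R : Type u) [Ring R] (N : ℕ) (hN : 2 ≤ N) (X : NCx.{u, u} R N) :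
    (∀ (j : ℤ) (x : X.M j), X.d j x = 0 →
        ∃ y : X.M (j - ((N - 1 : ℕ) : ℤ)),
          lcast (R := R) (M := X.M) (by omega)
            (dIter X.M X.d (N - 1) (j - ((N - 1 : ℕ) : ℤ)) y) = x) ↔
      (∀ (i : ℤ) (φ : NCxHom (mu1 R N (by omega) i) X), Nullhomotopic φ) := by
  have hN₀ : N ≠ 0 := by omega
  constructor
  · intro hcycles i φ
    exact (mu1.nullhomotopic_iff_isBoundary hN₀ φ).2 (hcycles i _ (mu1.d_f_one hN₀ φ))
  · intro hnull j x hx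
    have hφ := (mu1.nullhomotopic_iff_isBoundary hN₀ (mu1.homOfCycle hN₀ X x hx)).1 (hnull j _)
    rwa [mu1.homOfCycle_f_one] at hφ
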